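/- arXiv:math/0606566 — 4 statements merged into one kernel-verified Lean document; each statement's English description precedes it below -/
import Mathlib

section
/- For each n and s ≥ 0 there is a bijection between the set WSP_n(s) of weighted signed permutations (c, w) with c_1 ≤ s and the set {0,1,...,s}^n of words d, such that tot c = tot d and neg w = odd d. Consequently sum over (c,w) in WSP_n(s) of q^{tot c} Z^{neg w} = (sum over i=0 to s of q^i Z^{χ(i odd)})^n. -/
open Finset

attribute [local instance] Classical.propDecidable

noncomputable section

/-- The word `x_1 x_2 ... x_n` (0-indexed) of a signed permutation of order `n`,
encoded as a pair (permutation, signs): `x_i = ±(σ(i)+1)`. -/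
def sword (n : ℕ) (w : Equiv.Perm (Fin n) × (Fin n → Bool)) : ℕ → ℤ :=
  fun i => if h : i < n then
      (if w.2 ⟨i, h⟩ then -(((w.1 ⟨i, h⟩ : ℕ) : ℤ) + 1) else (((w.1 ⟨i, h⟩ : ℕ) : ℤ) + 1))
    else 0

/-- number of negative letters -/
def negStat (n : ℕ) (x : ℕ → ℤ) : ℕ := ((Finset.range n).filter (fun i => x i < 0)).card

/-- number of positive fixed points (`x_i = i`, 1-indexed) -/
def fixPlus (n : ℕ) (x : ℕ → ℤ) : ℕ :=
  ((Finset.range n).filter (fun i => x i = (i : ℤ) + 1)).card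

/-- number of negative fixed points (`x_i = -i`, 1-indexed) -/
def fixMinus (n : ℕ) (x : ℕ → ℤ) : ℕ :=
  ((Finset.range n).filter (fun i => x i = -((i : ℤ) + 1))).card

/-- major index of the word -/
def majStat (n : ℕ) (x : ℕ → ℤ) : ℕ :=
  ∑ i ∈ Finset.range (n - 1), if x (i + 1) < x i then i + 1 else 0

/-- number of inversions of the word -/
def invStat (n : ℕ) (x : ℕ → ℤ) : ℕ :=
  ((Finset.range n ×ˢ Finset.range n).filter (fun p => p.1 < p.2 ∧ x p.2 < x p.1)).card

/-- length function `ℓ(w) = inv w + ∑_{x_i<0} |x_i|` -/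
def lenStat (n : ℕ) (x : ℕ → ℤ) : ℕ :=
  invStat n x + ∑ i ∈ Finset.range n, if x i < 0 then (x i).natAbs else 0

/-- flag-major index `fmaj = 2 maj + neg` -/
def fmajStat (n : ℕ) (x : ℕ → ℤ) : ℕ := 2 * majStat n x + negStat n x

/-- the word `x_0 ... x_{m-1}` has its leftmost trough at position `2k` (1-indexed):
`x_1 > x_2 > ... > x_{2k}` and `x_{2k} < x_{2k+1}` (with `x_{m+1} = ∞`). -/
def IsDesarAt (m k : ℕ) (x : ℕ → ℤ) : Prop :=
  1 ≤ k ∧ 2 * k ≤ m ∧ (∀ i, i + 1 < 2 * k → x (i + 1) < x i) ∧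
    (2 * k = m ∨ x (2 * k - 1) < x (2 * k))

/-- a word of length `m` is a desarrangement (empty word included) -/
def IsDesar (m : ℕ) (x : ℕ → ℤ) : Prop :=
  m = 0 ∨ ∃ k, IsDesarAt m k x

/-- the length of the longest right factor of the word of length `n`
which is a desarrangement -/
def dlen (n : ℕ) (x : ℕ → ℤ) : ℕ :=
  sSup {m | m ≤ n ∧ IsDesar m (fun i => x (n - m + i))}

/-- number of letters of `w^-` in the pixed factorization `w = w^- w^+ w^d` -/
def pixMinus (n : ℕ) (x : ℕ → ℤ) : ℕ :=
  ((Finset.range (n - dlen n x)).filter (fun i => x i < 0)).card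

/-- number of letters of `w^+` in the pixed factorization `w = w^- w^+ w^d` -/
def pixPlus (n : ℕ) (x : ℕ → ℤ) : ℕ :=
  ((Finset.range (n - dlen n x)).filter (fun i => 0 < x i)).card

/-- the number of derangements of an `m`-element set -/
def dnum (m : ℕ) : ℕ :=
  (Finset.univ.filter (fun σ : Equiv.Perm (Fin m) => ∀ i, σ i ≠ i)).card

/-- the word of an ordinary permutation of `{1, ..., m}` -/
def pword (m : ℕ) (σ : Equiv.Perm (Fin m)) : ℕ → ℤ :=
  fun i => if h : i < m then ((σ ⟨i, h⟩ : ℕ) : ℤ) + 1 else 0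

/-- the q-ascending factorial `(q;q)_m` -/
def qq {K : Type*} [CommRing K] (q : K) (m : ℕ) : K :=
  ∏ i ∈ Finset.range m, (1 - q ^ (i + 1))

/-- `D_m(q)`: generating polynomial for derangements of order `m` by major index -/
def Dmaj {K : Type*} [CommRing K] (q : K) (m : ℕ) : K :=
  ∑ σ ∈ Finset.univ.filter (fun σ : Equiv.Perm (Fin m) => ∀ i, σ i ≠ i),
    q ^ majStat m (pword m σ)

/-- `(c, w)` is a weighted signed permutation of order `n` with weights at most `s`:
`c` nonincreasing, `c_k = c_{k+1} ⇒ x_k < x_{k+1}`, and `x_k > 0 ⇔ c_k` even. -/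
def WSPcond (n s : ℕ)
    (p : (Fin n → Fin (s + 1)) × (Equiv.Perm (Fin n) × (Fin n → Bool))) : Prop :=
  (∀ i j : Fin n, i ≤ j → p.1 j ≤ p.1 i) ∧
  (∀ (i : ℕ) (h : i + 1 < n),
      (p.1 ⟨i, Nat.lt_of_succ_lt h⟩ : ℕ) = (p.1 ⟨i + 1, h⟩ : ℕ) →
        sword n p.2 i < sword n p.2 (i + 1)) ∧
  (∀ i : Fin n, (0 < sword n p.2 (i : ℕ) ↔ Even (p.1 i : ℕ)))


lemma strictMono_of_lt_succ' {n : ℕ} {α : Type*} [Preorder α] {f : Fin n → α}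
    (h : ∀ (i : ℕ) (hi : i + 1 < n), f ⟨i, Nat.lt_of_succ_lt hi⟩ < f ⟨i + 1, hi⟩) :
    StrictMono f := by
  have key : ∀ m : ℕ, ∀ a b : Fin n, (b : ℕ) = (a : ℕ) + m + 1 → f a < f b := by
    intro m
    induction m with
    | zero =>
      intro a b hb
      have hb' : (a : ℕ) + 1 < n := hb ▸ b.isLt
      have hb2 : b = ⟨(a:ℕ)+1, hb'⟩ := Fin.ext (by simpa using hb)
      rw [hb2]
      exact h a hb'
    | succ m ih =>
      intro a b hb
      have hmid : (a : ℕ) + m + 1 < n := by omega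
      have h1 : f a < f ⟨(a:ℕ) + m + 1, hmid⟩ := ih a _ rfl
      have hb' : ((a:ℕ) + m + 1) + 1 < n := by omega
      have hb2 : b = ⟨(a:ℕ)+m+1+1, hb'⟩ := Fin.ext (by simp; omega)
      have h2 := h ((a:ℕ) + m + 1) hb'
      rw [hb2]
      exact h1.trans h2
  intro a b hab
  exact key ((b:ℕ) - (a:ℕ) - 1) a b (by have := (Fin.lt_iff_val_lt_val.1 hab); omega)

lemma linaux {n a b r r' : ℕ} (hr : r < n) (hr' : r' < n) :
    a * n + r < b * n + r' ↔ a < b ∨ (a = b ∧ r < r') := by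
  constructor
  · intro h
    rcases lt_trichotomy a b with h1 | h1 | h1
    · exact Or.inl h1
    · subst h1; right; exact ⟨rfl, by omega⟩
    · exfalso
      have : (b + 1) * n ≤ a * n := Nat.mul_le_mul_right n (by omega)
      have : b * n + n ≤ a * n := by rw [Nat.succ_mul] at this; omega
      omega
  · rintro (h1 | ⟨rfl, h2⟩)
    · have : (a + 1) * n ≤ b * n := Nat.mul_le_mul_right n (by omega)
      have : a * n + n ≤ b * n := by rw [Nat.succ_mul] at this; omega
      omega
    · omega
/-- the sorting key -/
def wkey (n s : ℕ) (d : Fin n → Fin (s + 1)) (j : Fin n) : ℕ :=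
  (s - (d j : ℕ)) * n + (if Even ((d j : ℕ)) then (j : ℕ) else n - 1 - (j : ℕ))

lemma wkey_snd_lt {n s : ℕ} (d : Fin n → Fin (s + 1)) (j : Fin n) :
    (if Even ((d j : ℕ)) then (j : ℕ) else n - 1 - (j : ℕ)) < n := by
  have := j.isLt
  split <;> omega

lemma wkey_lt_iff {n s : ℕ} (d : Fin n → Fin (s + 1)) (j j' : Fin n) :
    wkey n s d j < wkey n s d j' ↔
      ((d j' : ℕ) < (d j : ℕ) ∨ ((d j : ℕ) = (d j' : ℕ) ∧
        (if Even ((d j : ℕ)) then (j : ℕ) else n - 1 - (j : ℕ)) <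
          (if Even ((d j' : ℕ)) then (j' : ℕ) else n - 1 - (j' : ℕ)))) := by
  rw [wkey, wkey, linaux (wkey_snd_lt d j) (wkey_snd_lt d j')]
  have h1 := (d j).isLt
  have h2 := (d j').isLt
  constructor
  · rintro (h | ⟨h, h'⟩)
    · left; omega
    · right; exact ⟨by omega, h'⟩
  · rintro (h | ⟨h, h'⟩)
    · left; omega
    · right; exact ⟨by omega, h'⟩

lemma wkey_inj {n s : ℕ} (d : Fin n → Fin (s + 1)) : Function.Injective (wkey n s d) := by
  intro j j' h
  rcases lt_trichotomy (wkey n s d j) (wkey n s d j') with hl | he | hl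
  · omega
  · rw [wkey, wkey] at he
    have h1 := (d j).isLt
    have h2 := (d j').isLt
    have hs1 := wkey_snd_lt d j
    have hs2 := wkey_snd_lt d j'
    have hfst : s - (d j : ℕ) = s - (d j' : ℕ) ∧
        (if Even ((d j : ℕ)) then (j : ℕ) else n - 1 - (j : ℕ)) =
          (if Even ((d j' : ℕ)) then (j' : ℕ) else n - 1 - (j' : ℕ)) := by
      constructor
      · by_contra hne
        rcases Nat.lt_or_ge (s - (d j : ℕ)) (s - (d j' : ℕ)) with hc | hc
        · have := (linaux hs1 hs2).2 (Or.inl hc); omega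
        · have hc' : s - (d j' : ℕ) < s - (d j : ℕ) := by omega
          have := (linaux hs2 hs1).2 (Or.inl hc'); omega
      · by_contra hne
        have hfe : s - (d j : ℕ) = s - (d j' : ℕ) := by
          by_contra h2'
          rcases Nat.lt_or_ge (s - (d j : ℕ)) (s - (d j' : ℕ)) with hc | hc
          · have := (linaux hs1 hs2).2 (Or.inl hc); omega
          · have hc' : s - (d j' : ℕ) < s - (d j : ℕ) := by omega
            have := (linaux hs2 hs1).2 (Or.inl hc'); omega
        rw [hfe] at he
        omega
    have hd : (d j : ℕ) = (d j' : ℕ) := by omega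
    rw [hd] at hfst
    rcases hfst with ⟨-, hsnd⟩
    have hj := j.isLt
    have hj' := j'.isLt
    split at hsnd <;> exact Fin.ext (by omega)
  · omega
lemma sword_apply {n : ℕ} (σ : Equiv.Perm (Fin n)) (ε : Fin n → Bool) (k : Fin n) :
    sword n (σ, ε) (k : ℕ) =
      if ε k then -(((σ k : ℕ) : ℤ) + 1) else (((σ k : ℕ) : ℤ) + 1) := by
  simp [sword, k.isLt]

lemma sword_pos_iff {n : ℕ} (σ : Equiv.Perm (Fin n)) (ε : Fin n → Bool) (k : Fin n) :
    0 < sword n (σ, ε) (k : ℕ) ↔ ε k = false := by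
  rw [sword_apply]
  cases h : ε k <;> simp <;> omega

lemma sword_neg_iff {n : ℕ} (σ : Equiv.Perm (Fin n)) (ε : Fin n → Bool) (k : Fin n) :
    sword n (σ, ε) (k : ℕ) < 0 ↔ ε k = true := by
  rw [sword_apply]
  cases h : ε k <;> simp <;> omega

lemma wsp_eps {n s : ℕ} {c : Fin n → Fin (s + 1)} {σ : Equiv.Perm (Fin n)} {ε : Fin n → Bool}
    (h : WSPcond n s (c, (σ, ε))) (k : Fin n) :
    (ε k = true ↔ ¬ Even ((c k : ℕ))) := by
  have h3 := (h.2.2 k)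
  rw [show sword n (c, (σ, ε)).2 (k : ℕ) = sword n (σ, ε) (k : ℕ) from rfl,
    sword_pos_iff] at h3
  constructor
  · intro he hev
    have := h3.2 hev
    rw [he] at this
    simp at this
  · intro hnev
    cases hh : ε k with
    | false => exact absurd (h3.1 hh) hnev
    | true => rfl

lemma wsp_strictMono {n s : ℕ} {c : Fin n → Fin (s + 1)} {σ : Equiv.Perm (Fin n)}
    {ε : Fin n → Bool} (h : WSPcond n s (c, (σ, ε))) :
    StrictMono (fun k => wkey n s (fun j => c (σ.symm j)) (σ k)) := by
  apply strictMono_of_lt_succ'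
  intro i hi
  set k0 : Fin n := ⟨i, Nat.lt_of_succ_lt hi⟩ with hk0
  set k1 : Fin n := ⟨i + 1, hi⟩ with hk1
  have hd : ∀ k : Fin n, (fun j => c (σ.symm j)) (σ k) = c k := fun k => by simp
  simp only [wkey_lt_iff, hd]
  have hle : c k1 ≤ c k0 := h.1 k0 k1 (by simp [hk0, hk1, Fin.le_def])
  rcases eq_or_lt_of_le hle with heq | hlt
  · right
    refine ⟨by rw [heq], ?_⟩
    have hs := h.2.1 i hi
    have hs0 : sword n (σ, ε) (k0 : ℕ) < sword n (σ, ε) (k1 : ℕ) := by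
      simpa using hs (by show ((c k0 : ℕ)) = ((c k1 : ℕ)); rw [heq])
    rw [sword_apply, sword_apply] at hs0
    have hpar : Even ((c k0 : ℕ)) ↔ Even ((c k1 : ℕ)) := by rw [heq]
    have he0 := wsp_eps h k0
    have he1 := wsp_eps h k1
    rw [heq]
    by_cases hev : Even ((c k0 : ℕ))
    · have hε0 : ε k0 = false := Bool.eq_false_iff.2 (fun hh => (he0.1 hh) hev)
      have hε1 : ε k1 = false :=
        Bool.eq_false_iff.2 (fun hh => (he1.1 hh) (hpar.1 hev))
      rw [hε0, hε1] at hs0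
      simp at hs0
      rw [if_pos hev, if_pos hev]
      omega
    · have hε0 : ε k0 = true := he0.2 hev
      have hε1 : ε k1 = true := he1.2 (fun hh => hev (hpar.2 hh))
      rw [hε0, hε1] at hs0
      simp at hs0
      rw [if_neg hev, if_neg hev]
      have b0 := (σ k0).isLt
      have b1 := (σ k1).isLt
      omega
  · left
    exact hlt

lemma wsp_sort_eq {n s : ℕ} {c : Fin n → Fin (s + 1)} {σ : Equiv.Perm (Fin n)}
    {ε : Fin n → Bool} (h : WSPcond n s (c, (σ, ε))) :
    σ = Tuple.sort (wkey n s (fun j => c (σ.symm j))) := by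
  rw [Tuple.eq_sort_iff]
  have hm := wsp_strictMono h
  exact ⟨hm.monotone, fun i j hij he => absurd he (hm hij).ne⟩
def Gmap (n s : ℕ) (d : Fin n → Fin (s + 1)) :
    (Fin n → Fin (s + 1)) × (Equiv.Perm (Fin n) × (Fin n → Bool)) :=
  (fun k => d (Tuple.sort (wkey n s d) k),
    (Tuple.sort (wkey n s d),
      fun k => if Even ((d (Tuple.sort (wkey n s d) k) : ℕ)) then false else true))

lemma Gmap_cond (n s : ℕ) (d : Fin n → Fin (s + 1)) : WSPcond n s (Gmap n s d) := by
  set π := Tuple.sort (wkey n s d) with hπ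
  set ε : Fin n → Bool := fun k => if Even ((d (π k) : ℕ)) then false else true with hε
  have hmono : StrictMono (fun k => wkey n s d (π k)) :=
    (Tuple.monotone_sort (wkey n s d)).strictMono_of_injective
      ((wkey_inj d).comp π.injective)
  refine ⟨?_, ?_, ?_⟩
  · intro i j hij
    rcases eq_or_lt_of_le hij with rfl | hlt
    · exact le_refl _
    · have h2 := hmono hlt
      rw [wkey_lt_iff] at h2
      show d (π j) ≤ d (π i)
      rw [Fin.le_def]
      rcases h2 with h | ⟨h, -⟩
      · omega
      · omega
  · intro i hi heq
    set k0 : Fin n := ⟨i, Nat.lt_of_succ_lt hi⟩ with hk0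
    set k1 : Fin n := ⟨i + 1, hi⟩ with hk1
    have heq' : ((d (π k0) : ℕ)) = ((d (π k1) : ℕ)) := heq
    have hlt := hmono (show k0 < k1 by rw [Fin.lt_def]; exact Nat.lt_succ_self i)
    rw [wkey_lt_iff] at hlt
    rcases hlt with h | ⟨-, h⟩
    · omega
    · show sword n (π, ε) (k0 : ℕ) < sword n (π, ε) (k1 : ℕ)
      rw [sword_apply, sword_apply]
      by_cases hev : Even ((d (π k0) : ℕ))
      · have hev1 : Even ((d (π k1) : ℕ)) := heq' ▸ hev
        have hε0 : ε k0 = false := by simp [hε, hev]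
        have hε1 : ε k1 = false := by simp [hε, hev1]
        rw [hε0, hε1]
        simp only [Bool.false_eq_true, if_neg, if_false]
        rw [if_pos hev, if_pos hev1] at h
        omega
      · have hev1 : ¬ Even ((d (π k1) : ℕ)) := heq' ▸ hev
        have hε0 : ε k0 = true := by simp [hε, hev]
        have hε1 : ε k1 = true := by simp [hε, hev1]
        rw [hε0, hε1]
        simp only [if_pos]
        rw [if_neg hev, if_neg hev1] at h
        have b0 := (π k0).isLt
        have b1 := (π k1).isLt
        omega
  · intro k
    show 0 < sword n (π, ε) (k : ℕ) ↔ Even ((d (π k) : ℕ))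
    rw [sword_pos_iff]
    by_cases hev : Even ((d (π k) : ℕ)) <;> simp [hε, hev]

lemma Gmap_F (n s : ℕ) (d : Fin n → Fin (s + 1)) (j : Fin n) :
    (Gmap n s d).1 ((Gmap n s d).2.1.symm j) = d j := by
  simp [Gmap]

theorem stmt10 (n s : ℕ) (R : Type*) [CommRing R] (q Z : R) :
    (∃ F : {p : (Fin n → Fin (s + 1)) × (Equiv.Perm (Fin n) × (Fin n → Bool)) //
              WSPcond n s p} → (Fin n → Fin (s + 1)),
        Function.Bijective F ∧
        ∀ p, (∑ i, ((p : {p // WSPcond n s p}).1.1 i : ℕ)) = (∑ i, (F p i : ℕ)) ∧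
          negStat n (sword n (p : {p // WSPcond n s p}).1.2)
            = (Finset.univ.filter (fun i => Odd (F p i : ℕ))).card) ∧
    (∑ p ∈ Finset.univ.filter (WSPcond n s),
        q ^ (∑ i, (p.1 i : ℕ)) * Z ^ negStat n (sword n p.2))
      = (∑ i ∈ Finset.range (s + 1), q ^ i * Z ^ (if Odd i then 1 else 0)) ^ n := by
  set F : {p : (Fin n → Fin (s + 1)) × (Equiv.Perm (Fin n) × (Fin n → Bool)) //
      WSPcond n s p} → (Fin n → Fin (s + 1)) :=
    fun p => fun j => p.1.1 (p.1.2.1.symm j) with hF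
  have hinj : Function.Injective F := by
    rintro ⟨⟨c, σ, ε⟩, hp⟩ ⟨⟨c', σ', ε'⟩, hp'⟩ h
    have hd : (fun j => c (σ.symm j)) = (fun j => c' (σ'.symm j)) := h
    have hσ : σ = σ' := by
      rw [wsp_sort_eq hp, wsp_sort_eq hp', hd]
    have hc : c = c' := by
      funext k
      have e1 : c k = (fun j => c (σ.symm j)) (σ k) := by simp
      have e2 : c' k = (fun j => c' (σ'.symm j)) (σ' k) := by simp
      rw [e1, e2, hd, hσ]
    have hε : ε = ε' := by
      funext k
      have h1 := wsp_eps hp k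
      have h2 := wsp_eps hp' k
      rw [← hc] at h2
      rw [Bool.eq_iff_iff, h1, h2]
    subst hσ hc hε
    rfl
  have hsurj : Function.Surjective F := by
    intro d
    exact ⟨⟨Gmap n s d, Gmap_cond n s d⟩, funext (fun j => Gmap_F n s d j)⟩
  have hprop : ∀ p : {p : (Fin n → Fin (s + 1)) × (Equiv.Perm (Fin n) × (Fin n → Bool)) //
      WSPcond n s p},
      (∑ i, (p.1.1 i : ℕ)) = (∑ i, (F p i : ℕ)) ∧
        negStat n (sword n p.1.2)
          = (Finset.univ.filter (fun i => Odd (F p i : ℕ))).card := by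
    rintro ⟨⟨c, σ, ε⟩, hp⟩
    constructor
    · exact (Equiv.sum_comp σ.symm (fun j => ((c j : ℕ)))).symm
    · have h1 : negStat n (sword n (σ, ε)) = ∑ k : Fin n, if Odd ((c k : ℕ)) then 1 else 0 := by
        rw [negStat, Finset.card_filter,
          ← Fin.sum_univ_eq_sum_range (fun i => if sword n (σ, ε) i < 0 then 1 else 0) n]
        refine Finset.sum_congr rfl (fun k _ => ?_)
        have : (sword n (σ, ε) (k : ℕ) < 0) ↔ Odd ((c k : ℕ)) := by
          rw [sword_neg_iff, wsp_eps hp k, Nat.not_even_iff_odd.symm]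
        simp only [this]
      have h2 : (Finset.univ.filter
          (fun i => Odd ((F ⟨(c, σ, ε), hp⟩ i : ℕ)))).card
          = ∑ j : Fin n, if Odd ((c (σ.symm j) : ℕ)) then 1 else 0 := by
        rw [Finset.card_filter]
      show negStat n (sword n (σ, ε)) = _
      rw [h1, h2]
      exact (Equiv.sum_comp σ.symm (fun k => if Odd ((c k : ℕ)) then (1:ℕ) else 0)).symm
  refine ⟨⟨F, ⟨hinj, hsurj⟩, hprop⟩, ?_⟩
  have hstep1 : (∑ p ∈ Finset.univ.filter (WSPcond n s),
      q ^ (∑ i, (p.1 i : ℕ)) * Z ^ negStat n (sword n p.2))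
      = ∑ p : {p : (Fin n → Fin (s + 1)) × (Equiv.Perm (Fin n) × (Fin n → Bool)) //
          WSPcond n s p},
          q ^ (∑ i, (p.1.1 i : ℕ)) * Z ^ negStat n (sword n p.1.2) :=
    Finset.sum_subtype _ (by simp) _
  set g : (Fin n → Fin (s + 1)) → R := fun d =>
    q ^ (∑ i, ((d i : ℕ))) * Z ^ (Finset.univ.filter (fun i => Odd ((d i : ℕ)))).card with hg
  have hstep2 : ∀ p : {p : (Fin n → Fin (s + 1)) × (Equiv.Perm (Fin n) × (Fin n → Bool)) //
      WSPcond n s p},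
      q ^ (∑ i, (p.1.1 i : ℕ)) * Z ^ negStat n (sword n p.1.2) = g (F p) := by
    intro p
    rw [hg, (hprop p).1, (hprop p).2]
  rw [hstep1, Finset.sum_congr rfl (fun p _ => hstep2 p),
    Function.Bijective.sum_comp ⟨hinj, hsurj⟩ g]
  -- now: ∑ d : Fin n → Fin (s+1), g d = (∑ i ∈ range (s+1), ...) ^ n
  have hgd : ∀ d : Fin n → Fin (s + 1),
      g d = ∏ i : Fin n, (q ^ ((d i : ℕ)) * Z ^ (if Odd ((d i : ℕ)) then 1 else 0)) := by
    intro d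
    show q ^ (∑ i, ((d i : ℕ))) * Z ^ (Finset.univ.filter (fun i => Odd ((d i : ℕ)))).card = _
    rw [Finset.prod_mul_distrib, Finset.prod_pow_eq_pow_sum, Finset.prod_pow_eq_pow_sum,
      Finset.card_filter]
  rw [Finset.sum_congr rfl (fun d _ => hgd d)]
  have := Finset.sum_prod_piFinset (Finset.univ : Finset (Fin (s + 1)))
    (fun (_ : Fin n) (v : Fin (s + 1)) =>
      q ^ ((v : ℕ)) * Z ^ (if Odd ((v : ℕ)) then 1 else 0))
  rw [Fintype.piFinset_univ] at this
  rw [this, Finset.prod_const, Finset.card_univ, Fintype.card_fin]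
  congr 1
  rw [← Fin.sum_univ_eq_sum_range (fun i => q ^ i * Z ^ (if Odd i then 1 else 0)) (s + 1)]
end
end

section
/- The generating polynomial B_n(q, Y0, Y1, Z) = sum over w in B_n of q^{fmaj w} Y0^{fix^+ w} Y1^{fix^- w} Z^{neg w} satisfies B_n(q, Y0, Y1, Z) = q^{n^2} Z^n B_n(q^{-1}, Y1, Y0, Z^{-1}). -/
open Finset

attribute [local instance] Classical.propDecidable

noncomputable section

/-!
Negating every letter of a signed permutation is an involution of `B_n`. It swaps positive and
negative fixed points, sends `neg w` to `n - neg w`, and turns every descent into an ascent and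
back, so `maj w + maj w̄ = 1 + 2 + ⋯ + (n - 1)`; hence `fmaj w + fmaj w̄ = n (n - 1) + n = n ^ 2`.
Reindexing the right-hand sum by this involution gives the identity term by term.
-/

lemma natAbs_sword (n : ℕ) (w : Equiv.Perm (Fin n) × (Fin n → Bool)) {i : ℕ} (hi : i < n) :
    (sword n w i).natAbs = (w.1 ⟨i, hi⟩ : ℕ) + 1 := by
  simp only [sword, dif_pos hi]
  split <;> omega

lemma sword_ne_zero (n : ℕ) (w : Equiv.Perm (Fin n) × (Fin n → Bool)) {i : ℕ} (hi : i < n) :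
    sword n w i ≠ 0 := by
  intro h
  simpa [h] using natAbs_sword n w hi

lemma sword_injOn (n : ℕ) (w : Equiv.Perm (Fin n) × (Fin n → Bool)) :
    Set.InjOn (sword n w) (Set.Iio n) := by
  intro i hi j hj h
  have habs := natAbs_sword n w hi
  rw [h, natAbs_sword n w hj, add_left_inj, Fin.val_inj, w.1.apply_eq_iff_eq] at habs
  exact congrArg Fin.val habs.symm

lemma sword_flip_signs (n : ℕ) (σ : Equiv.Perm (Fin n)) (b : Fin n → Bool) :
    sword n (σ, fun i => !b i) = -sword n (σ, b) := by
  funext i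
  simp only [sword, Pi.neg_apply]
  split
  · cases b ⟨i, ‹_›⟩ <;> simp
  · simp

section WordNegation

variable (n : ℕ) (x : ℕ → ℤ)

lemma fixPlus_neg : fixPlus n (-x) = fixMinus n x := by
  simp only [fixPlus, fixMinus, Pi.neg_apply, neg_eq_iff_eq_neg]

lemma fixMinus_neg : fixMinus n (-x) = fixPlus n x := by
  simp only [fixPlus, fixMinus, Pi.neg_apply, neg_inj]

lemma negStat_add_negStat_neg (hx : ∀ i < n, x i ≠ 0) : negStat n x + negStat n (-x) = n := by
  rw [negStat, negStat]
  conv_rhs => rw [← card_range n, ← card_filter_add_card_filter_not (fun i => x i < 0)]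
  congr 2
  refine filter_congr fun i hi => ?_
  have := hx i (mem_range.mp hi)
  simp only [Pi.neg_apply]
  omega

lemma majStat_add_majStat_neg (hx : ∀ i, i + 1 < n → x (i + 1) ≠ x i) :
    majStat n x + majStat n (-x) = ∑ i ∈ range (n - 1), (i + 1) := by
  rw [majStat, majStat, ← sum_add_distrib]
  refine sum_congr rfl fun i hi => ?_
  have := hx i (by rw [mem_range] at hi; omega)
  simp only [Pi.neg_apply]
  split_ifs <;> omega

lemma fmajStat_add_fmajStat_neg (hx₀ : ∀ i < n, x i ≠ 0)
    (hx : ∀ i, i + 1 < n → x (i + 1) ≠ x i) :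
    fmajStat n x + fmajStat n (-x) = n ^ 2 := by
  have hmaj := majStat_add_majStat_neg n x hx
  have hneg := negStat_add_negStat_neg n x hx₀
  rw [fmajStat, fmajStat]
  rcases n with _ | m
  · simp_all
  · have hgauss : (∑ i ∈ range m, (i + 1)) * 2 = (m + 1) * m := by
      simpa [sum_range_succ'] using sum_range_id_mul_two (m + 1)
    rw [Nat.add_sub_cancel] at hmaj
    nlinarith

end WordNegation

lemma pow_eq_pow_mul_inv_pow {G : Type*} [GroupWithZero G] {a : G} (ha : a ≠ 0) {k l m : ℕ}
    (h : k + l = m) : a ^ k = a ^ m * a⁻¹ ^ l := by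
  rw [← h, pow_add, inv_pow, mul_inv_cancel_right₀ (pow_ne_zero l ha)]

theorem stmt14 (K : Type*) [Field K] (q Y0 Y1 Z : K) (hq : q ≠ 0) (hZ : Z ≠ 0) (n : ℕ) :
    (∑ w : Equiv.Perm (Fin n) × (Fin n → Bool),
        q ^ fmajStat n (sword n w) * Y0 ^ fixPlus n (sword n w)
          * Y1 ^ fixMinus n (sword n w) * Z ^ negStat n (sword n w))
      = q ^ (n ^ 2) * Z ^ n *
        (∑ w : Equiv.Perm (Fin n) × (Fin n → Bool),
          q⁻¹ ^ fmajStat n (sword n w) * Y1 ^ fixPlus n (sword n w)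
            * Y0 ^ fixMinus n (sword n w) * Z⁻¹ ^ negStat n (sword n w)) := by
  let bar : Equiv.Perm (Equiv.Perm (Fin n) × (Fin n → Bool)) :=
    Function.Involutive.toPerm (fun w => (w.1, fun i => !w.2 i)) fun w => by simp
  conv_rhs => rw [← Equiv.sum_comp bar, mul_sum]
  refine sum_congr rfl fun w _ => ?_
  obtain ⟨σ, b⟩ := w
  have hbar : sword n (bar (σ, b)) = -sword n (σ, b) := sword_flip_signs n σ b
  have hx₀ i (hi : i < n) := sword_ne_zero n (σ, b) hi
  have hx i (hi : i + 1 < n) : sword n (σ, b) (i + 1) ≠ sword n (σ, b) i :=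
    fun h => by simpa using sword_injOn n (σ, b) hi (show i < n by omega) h
  rw [hbar, fixPlus_neg, fixMinus_neg,
    pow_eq_pow_mul_inv_pow hq (fmajStat_add_fmajStat_neg n _ hx₀ hx),
    pow_eq_pow_mul_inv_pow hZ (negStat_add_negStat_neg n _ hx₀)]
  ring
end
end

section
/- For all n ≥ 1, the number of derangements d_n satisfies d_n = sum over k with 2 ≤ 2k ≤ n-1 of (2k) * (2k+2)(2k+3)...(n) [i.e., the rising product (2k+2)_{n-2k-1} = (2k+2)(2k+3)···(2k+2 + n-2k-2)] + χ(n even). -/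
open Finset

attribute [local instance] Classical.propDecidable

noncomputable section

/-!
Write `S n` for the sum over `k`. Passing from `n` to `n + 1` multiplies every rising product
`(2k+2)_{n-2k-1}` by `n + 1`, and when `n` is even a new summand `k = n/2` with the empty
product appears and contributes `n`. Hence
`S (n+1) + χ(n+1 even) = (n+1) (S n + χ(n even)) - (-1)^n`,
which is the classical recurrence `d_{n+1} = (n+1) d_n - (-1)^n`; both sides equal `1` at `n = 0`.
-/

def risingProductSum (n : ℕ) : ℕ :=
  ∑ k ∈ Icc 1 ((n - 1) / 2), 2 * k * (2 * k + 2).ascFactorial (n - 2 * k - 1)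

lemma risingProductSum_term_succ {n k : ℕ} (hk : 2 * k + 1 ≤ n) :
    2 * k * (2 * k + 2).ascFactorial (n + 1 - 2 * k - 1)
      = (n + 1) * (2 * k * (2 * k + 2).ascFactorial (n - 2 * k - 1)) := by
  rw [show n + 1 - 2 * k - 1 = (n - 2 * k - 1) + 1 by omega, Nat.ascFactorial_succ,
    show 2 * k + 2 + (n - 2 * k - 1) = n + 1 by omega]
  ring

lemma risingProductSum_succ_of_odd {n : ℕ} (hn : Odd n) :
    risingProductSum (n + 1) = (n + 1) * risingProductSum n := by
  obtain ⟨m, rfl⟩ := hn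
  rw [risingProductSum, risingProductSum, mul_sum,
    show (2 * m + 1 + 1 - 1) / 2 = (2 * m + 1 - 1) / 2 by omega]
  refine sum_congr rfl fun k hk => risingProductSum_term_succ ?_
  simp only [mem_Icc] at hk
  omega

lemma risingProductSum_succ_of_even {n : ℕ} (hn : Even n) :
    risingProductSum (n + 1) = (n + 1) * risingProductSum n + n := by
  obtain ⟨m, rfl⟩ := hn
  rcases m with _ | m
  · simp [risingProductSum]
  rw [risingProductSum, risingProductSum, show (m + 1 + (m + 1) + 1 - 1) / 2 = m + 1 by omega,
    show (m + 1 + (m + 1) - 1) / 2 = m by omega, sum_Icc_succ_top (by omega), mul_sum]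
  congr 1
  · refine sum_congr rfl fun k hk => risingProductSum_term_succ ?_
    simp only [mem_Icc] at hk
    omega
  · rw [show m + 1 + (m + 1) + 1 - 2 * (m + 1) - 1 = 0 by omega, Nat.ascFactorial_zero]
    ring

lemma risingProductSum_add_parity_succ (n : ℕ) :
    ((risingProductSum (n + 1) + if Even (n + 1) then 1 else 0 : ℕ) : ℤ)
      = (n + 1) * ((risingProductSum n + if Even n then 1 else 0 : ℕ) : ℤ) - (-1) ^ n := by
  rcases Nat.even_or_odd n with hn | hn
  · have hn' : ¬ Even (n + 1) := by simpa [Nat.even_add_one] using hn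
    rw [risingProductSum_succ_of_even hn, if_neg hn', if_pos hn, hn.neg_one_pow]
    push_cast
    ring
  · have hn' : ¬ Even n := Nat.not_even_iff_odd.mpr hn
    rw [risingProductSum_succ_of_odd hn, if_pos hn.add_one, if_neg hn', hn.neg_one_pow]
    push_cast
    ring

theorem numDerangements_eq_risingProductSum (n : ℕ) :
    numDerangements n = risingProductSum n + if Even n then 1 else 0 := by
  induction n with
  | zero => simp [risingProductSum]
  | succ n ih =>
    have h := numDerangements_succ n
    rw [ih, ← risingProductSum_add_parity_succ] at h
    exact_mod_cast h

lemma dnum_eq_numDerangements (m : ℕ) : dnum m = numDerangements m := by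
  rw [← card_derangements_fin_eq_numDerangements, ← Set.toFinset_card, dnum]
  congr 1
  ext σ
  rw [mem_filter, Set.mem_toFinset]
  simp [derangements]

lemma risingProductSum_eq_sum_filter (n : ℕ) :
    risingProductSum n =
      ∑ k ∈ (range (n + 1)).filter (fun k => 2 ≤ 2 * k ∧ 2 * k ≤ n - 1),
        (2 * k) * ∏ i ∈ range (n - 2 * k - 1), (2 * k + 2 + i) := by
  have hindex : (range (n + 1)).filter (fun k => 2 ≤ 2 * k ∧ 2 * k ≤ n - 1)
      = Icc 1 ((n - 1) / 2) := by
    ext k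
    simp only [mem_filter, mem_Icc, mem_range]
    omega
  simp only [risingProductSum, hindex, Nat.ascFactorial_eq_prod_range]

theorem stmt18_general (n : ℕ) :
    dnum n
      = (∑ k ∈ (Finset.range (n + 1)).filter (fun k => 2 ≤ 2 * k ∧ 2 * k ≤ n - 1),
          (2 * k) * ∏ i ∈ Finset.range (n - 2 * k - 1), (2 * k + 2 + i))
        + (if Even n then 1 else 0) := by
  rw [dnum_eq_numDerangements, numDerangements_eq_risingProductSum,
    risingProductSum_eq_sum_filter]

theorem stmt18 (n : ℕ) (hn : 1 ≤ n) :
    dnum n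
      = (∑ k ∈ (Finset.range (n + 1)).filter (fun k => 2 ≤ 2 * k ∧ 2 * k ≤ n - 1),
          (2 * k) * ∏ i ∈ Finset.range (n - 2 * k - 1), (2 * k + 2 + i))
        + (if Even n then 1 else 0) :=
  stmt18_general n
end
end

section
/- The generating polynomial for desarrangements of order n by number of inversions, K_n(q) = sum over σ in K_n of q^{inv σ}, equals sum over k with 2 ≤ 2k ≤ n-1 of ((1 - q^{2k})/(1 - q)) * ((q^{2k+2}; q)_{n-2k-1} / (1 - q)^{n-2k-1}) * q^{binom(2k,2)} + q^{binom(n,2)} χ(n even); moreover, each summand indexed by k is the inversion-generating polynomial for the desarrangements of order n whose leftmost trough is at position 2k. -/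
open Finset

attribute [local instance] Classical.propDecidable

noncomputable section

/-! Let `F_m(n)` be the inversion polynomial of the permutations of `[n]` whose first `m` letters
decrease. For `m ≤ n`, a permutation of `[n+1]` is determined by its last letter `v` and the
standardisation of the other letters; the last letter adds `n + 1 - v` inversions and does not
affect the first `m` letters, so `F_m(n+1) = [n+1]_q F_m(n)`. Since `F_n(n) = q^(n choose 2)`
(only the decreasing permutation), `F_m(n) = q^(m choose 2) [m+1]_q ⋯ [n]_q`.
A desarrangement has a unique leftmost trough `2k`; for `2k < n` the desarrangements with trough
`2k` are those counted by `F_{2k}(n)` but not by `F_{2k+1}(n)`, which gives the summand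
`F_{2k}(n) - F_{2k+1}(n) = q^(2k choose 2) [2k]_q [2k+2]_q ⋯ [n]_q`, and for `2k = n` only the
decreasing permutation is left. -/

open Equiv

section Words

variable {n : ℕ}

lemma pword_coe (σ : Perm (Fin n)) (a : Fin n) : pword n σ a = (σ a : ℤ) + 1 := by
  simp [pword]

lemma pword_lt_pword_iff (σ : Perm (Fin n)) (a b : Fin n) :
    pword n σ a < pword n σ b ↔ σ a < σ b := by
  rw [pword_coe, pword_coe, add_lt_add_iff_right, Nat.cast_lt, Fin.val_fin_lt]

lemma invStat_pword (σ : Perm (Fin n)) :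
    invStat n (pword n σ) =
      ∑ a : Fin n, ∑ b : Fin n, if a < b ∧ σ b < σ a then 1 else 0 := by
  rw [invStat, card_filter, sum_product, ← Fin.sum_univ_eq_sum_range]
  refine sum_congr rfl fun a _ => ?_
  rw [← Fin.sum_univ_eq_sum_range]
  simp only [pword_lt_pword_iff, Fin.val_fin_lt]

end Words

section InsertLast

variable {n : ℕ}

lemma lastCases_succAbove_injective (v : Fin (n + 1)) (τ : Perm (Fin n)) :
    Function.Injective
      (Fin.lastCases v fun i => v.succAbove (τ i) : Fin (n + 1) → Fin (n + 1)) := by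
  intro a b hab
  induction a using Fin.lastCases <;> induction b using Fin.lastCases <;>
    simp only [Fin.lastCases_last, Fin.lastCases_castSucc] at hab
  · rfl
  · exact absurd hab.symm (Fin.succAbove_ne v _)
  · exact absurd hab (Fin.succAbove_ne v _)
  · rw [τ.injective (Fin.succAbove_right_injective hab)]

def insertLast (v : Fin (n + 1)) (τ : Perm (Fin n)) : Perm (Fin (n + 1)) :=
  Equiv.ofBijective _ (Finite.injective_iff_bijective.mp (lastCases_succAbove_injective v τ))

@[simp]
lemma insertLast_last (v : Fin (n + 1)) (τ : Perm (Fin n)) :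
    insertLast v τ (Fin.last n) = v := by
  simp [insertLast]

@[simp]
lemma insertLast_castSucc (v : Fin (n + 1)) (τ : Perm (Fin n)) (i : Fin n) :
    insertLast v τ i.castSucc = v.succAbove (τ i) := by
  simp [insertLast]

lemma insertLast_bijective :
    Function.Bijective fun p : Fin (n + 1) × Perm (Fin n) => insertLast p.1 p.2 := by
  refine (Fintype.bijective_iff_injective_and_card _).mpr ⟨?_, ?_⟩
  · rintro ⟨v, τ⟩ ⟨v', τ'⟩ h
    have hv : v = v' := by simpa using congr($h (Fin.last n))
    subst hv
    refine Prod.ext rfl (Equiv.ext fun i => (Fin.succAbove_right_injective (p := v)) ?_)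
    simpa using congr($h i.castSucc)
  · simp [Fintype.card_perm, Nat.factorial_succ]

lemma pword_insertLast (v : Fin (n + 1)) (τ : Perm (Fin n)) (i : Fin n) :
    pword (n + 1) (insertLast v τ) i = (v.succAbove (τ i) : ℤ) + 1 := by
  rw [← Fin.val_castSucc, pword_coe, insertLast_castSucc]

lemma card_lt_succAbove (v : Fin (n + 1)) : #{w : Fin n | v < v.succAbove w} = n - v := by
  have hlt : #{w : Fin n | w.castSucc < v} = v := by
    simpa [Fin.lt_def, Nat.lt_succ_iff.mp v.isLt] using Fin.card_filter_val_lt (n := n) (m := v)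
  simp only [Fin.lt_succAbove_iff_le_castSucc, ← not_lt]
  have := card_filter_add_card_filter_not (s := univ) (fun w : Fin n => w.castSucc < v)
  rw [hlt, card_univ, Fintype.card_fin] at this
  omega

lemma invStat_pword_insertLast (v : Fin (n + 1)) (τ : Perm (Fin n)) :
    invStat (n + 1) (pword (n + 1) (insertLast v τ)) = invStat n (pword n τ) + (n - v) := by
  rw [invStat_pword, invStat_pword, ← card_lt_succAbove, card_filter]
  simp only [Fin.sum_univ_castSucc, insertLast_castSucc, insertLast_last,
    Fin.castSucc_lt_castSucc_iff, Fin.succAbove_lt_succAbove_iff, Fin.castSucc_lt_last,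
    (Fin.le_last _).not_gt, lt_irrefl, true_and, false_and, if_false, sum_const_zero, add_zero,
    sum_add_distrib]
  rw [Equiv.sum_comp τ (fun i => if v < v.succAbove i then 1 else 0)]

end InsertLast

section DecreasingPrefix

variable {n : ℕ}

def IsDecreasingPrefix (m : ℕ) (x : ℕ → ℤ) : Prop :=
  ∀ i, i + 1 < m → x (i + 1) < x i

lemma isDecreasingPrefix_succ_iff {m : ℕ} (hm : 1 ≤ m) (x : ℕ → ℤ) :
    IsDecreasingPrefix (m + 1) x ↔ IsDecreasingPrefix m x ∧ x m < x (m - 1) := by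
  refine ⟨fun h => ⟨fun i hi => h i (by omega), ?_⟩, fun ⟨h, hlast⟩ i hi => ?_⟩
  · simpa [Nat.sub_add_cancel hm] using h (m - 1) (by omega)
  · rcases Nat.lt_or_ge (i + 1) m with hi' | hi'
    · exact h i hi'
    · obtain rfl : i = m - 1 := by omega
      simpa [Nat.sub_add_cancel hm] using hlast

lemma isDecreasingPrefix_pword_insertLast_iff {m : ℕ} (hm : m ≤ n) (v : Fin (n + 1))
    (τ : Perm (Fin n)) :
    IsDecreasingPrefix m (pword (n + 1) (insertLast v τ)) ↔
      IsDecreasingPrefix m (pword n τ) := by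
  refine forall_congr' fun i => imp_congr_right fun hi => ?_
  have h := pword_insertLast v τ ⟨i, by omega⟩
  have h' := pword_insertLast v τ ⟨i + 1, by omega⟩
  have e := pword_coe τ ⟨i, by omega⟩
  have e' := pword_coe τ ⟨i + 1, by omega⟩
  simp only at h h' e e'
  rw [h, h', e, e', add_lt_add_iff_right, add_lt_add_iff_right, Nat.cast_lt, Nat.cast_lt,
    Fin.val_fin_lt, Fin.val_fin_lt, Fin.succAbove_lt_succAbove_iff]

lemma isDecreasingPrefix_pword_self_iff (σ : Perm (Fin n)) :
    IsDecreasingPrefix n (pword n σ) ↔ σ = Fin.revPerm := by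
  refine ⟨fun h => ?_, ?_⟩
  · have hanti : StrictAnti σ := by
      cases n with
      | zero => exact fun a => a.elim0
      | succ n =>
        refine Fin.strictAnti_iff_succ_lt.mpr fun i => (pword_lt_pword_iff σ _ _).mp ?_
        exact h i (by omega)
    have hid : σ ∘ Fin.rev = id := (hanti.comp Fin.rev_strictAnti).eq_id
    exact Equiv.ext fun i => by simpa using congrFun hid i.rev
  · rintro rfl i hi
    exact (pword_lt_pword_iff _ ⟨i + 1, by omega⟩ ⟨i, by omega⟩).mpr
      (Fin.rev_lt_rev.mpr (Fin.mk_lt_mk.mpr (Nat.lt_succ_self i)))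

end DecreasingPrefix

section GeneratingFunction

variable {K : Type*} [CommRing K] (q : K)

def decPrefixInvGF (n m : ℕ) : K :=
  ∑ σ ∈ univ.filter (fun σ : Perm (Fin n) => IsDecreasingPrefix m (pword n σ)),
    q ^ invStat n (pword n σ)

lemma revPerm_eq_insertLast (n : ℕ) :
    (Fin.revPerm : Perm (Fin (n + 1))) = insertLast 0 Fin.revPerm := by
  ext i
  induction i using Fin.lastCases <;> simp [Fin.rev_castSucc]

lemma invStat_pword_revPerm (n : ℕ) : invStat n (pword n Fin.revPerm) = n.choose 2 := by
  induction n with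
  | zero => simp [invStat]
  | succ n ih =>
    rw [revPerm_eq_insertLast, invStat_pword_insertLast, ih, Nat.choose_succ_succ',
      Nat.choose_one_right]
    simp [add_comm]

lemma decPrefixInvGF_self (n : ℕ) : decPrefixInvGF q n n = q ^ n.choose 2 := by
  have : univ.filter (fun σ : Perm (Fin n) => IsDecreasingPrefix n (pword n σ)) =
      {Fin.revPerm} := by
    ext σ
    simp [isDecreasingPrefix_pword_self_iff]
  rw [decPrefixInvGF, this, sum_singleton, invStat_pword_revPerm]

lemma decPrefixInvGF_succ {n m : ℕ} (hm : m ≤ n) :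
    decPrefixInvGF q (n + 1) m = (∑ j ∈ range (n + 1), q ^ j) * decPrefixInvGF q n m := by
  rw [decPrefixInvGF, decPrefixInvGF, sum_filter, sum_filter,
    ← Fintype.sum_bijective _ insertLast_bijective _ _ fun _ => rfl, Fintype.sum_prod_type]
  simp only [isDecreasingPrefix_pword_insertLast_iff hm, invStat_pword_insertLast, pow_add,
    ← ite_zero_mul, ← sum_mul, ← mul_sum]
  rw [mul_comm, Fin.sum_univ_eq_sum_range (fun v => q ^ (n - v)), ← sum_range_reflect]
  congr 1
  refine sum_congr rfl fun j hj => ?_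
  rw [Nat.add_sub_cancel, Nat.sub_sub_self (Nat.lt_succ_iff.mp (mem_range.mp hj))]

lemma decPrefixInvGF_eq {n m : ℕ} (hm : m ≤ n) :
    decPrefixInvGF q n m =
      q ^ m.choose 2 * ∏ i ∈ range (n - m), ∑ j ∈ range (m + 1 + i), q ^ j := by
  induction n, hm using Nat.le_induction with
  | base => simp [decPrefixInvGF_self]
  | succ n hmn ih =>
    rw [decPrefixInvGF_succ q hmn, ih, Nat.sub_add_comm hmn, prod_range_succ,
      show m + 1 + (n - m) = n + 1 by omega]
    ring

end GeneratingFunction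

lemma one_sub_pow_div_one_sub {K : Type*} [Field K] {q : K} (h1 : 1 - q ≠ 0) (N : ℕ) :
    (1 - q ^ N) / (1 - q) = ∑ j ∈ range N, q ^ j := by
  rw [geom_sum_eq (fun h => h1 (by rw [h, sub_self])), ← neg_div_neg_eq, neg_sub, neg_sub]

lemma prod_one_sub_pow_div_one_sub_pow {K : Type*} [Field K] {q : K} (h1 : 1 - q ≠ 0)
    (a L : ℕ) :
    (∏ i ∈ range L, (1 - q ^ (a + i))) / (1 - q) ^ L =
      ∏ i ∈ range L, ∑ j ∈ range (a + i), q ^ j := by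
  simp only [← one_sub_pow_div_one_sub h1, prod_div_distrib, prod_const, card_range]

lemma sum_ite_two_mul_eq {M : Type*} [AddCommMonoid M] (n : ℕ) (c : M) {s : Finset ℕ}
    (hs : ∀ k, 2 * k = n → k ∈ s) :
    ∑ k ∈ s, (if 2 * k = n then c else 0) = if Even n then c else 0 := by
  rcases Nat.even_or_odd' n with ⟨r, rfl | rfl⟩
  · rw [sum_eq_single_of_mem r (hs r rfl) fun k _ hk => if_neg (by omega), if_pos rfl,
      if_pos (even_two_mul r)]
  · rw [sum_eq_zero fun k _ => if_neg (by omega), if_neg (Nat.not_even_two_mul_add_one r)]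

section Desarrangements

lemma IsDesarAt.le {m k k' : ℕ} {x : ℕ → ℤ} (h : IsDesarAt m k x) (h' : IsDesarAt m k' x) :
    k ≤ k' := by
  by_contra hlt
  obtain ⟨-, hkm, hdec, -⟩ := h
  obtain ⟨hk', -, -, htrough | htrough⟩ := h'
  · omega
  · have := hdec (2 * k' - 1) (by omega)
    rw [Nat.sub_add_cancel (by omega)] at this
    exact lt_asymm this htrough

lemma IsDesarAt.unique {m k k' : ℕ} {x : ℕ → ℤ} (h : IsDesarAt m k x)
    (h' : IsDesarAt m k' x) : k = k' :=
  le_antisymm (h.le h') (h'.le h)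

variable {n : ℕ} {K : Type*}

lemma sum_isDesar_pword_eq_sum_isDesarAt [AddCommMonoid K] (hn : n ≠ 0) (f : Perm (Fin n) → K) :
    ∑ σ ∈ univ.filter (fun σ : Perm (Fin n) => IsDesar n (pword n σ)), f σ
      = ∑ k ∈ range (n + 1),
          ∑ σ ∈ univ.filter (fun σ : Perm (Fin n) => IsDesarAt n k (pword n σ)), f σ := by
  rw [← sum_biUnion fun k _ k' _ hne => disjoint_filter.mpr fun σ _ h h' => hne (h.unique h')]
  refine sum_congr (ext fun σ => ?_) fun _ _ => rfl
  simp only [IsDesar, hn, false_or, mem_filter, mem_univ, true_and, mem_biUnion, mem_range]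
  exact ⟨fun ⟨k, hk⟩ => ⟨k, by have := hk.2.1; omega, hk⟩,
    fun ⟨k, _, hk⟩ => ⟨k, hk⟩⟩

lemma isDesarAt_pword_iff {k : ℕ} (hk : 1 ≤ k) (h2k : 2 * k < n) (σ : Perm (Fin n)) :
    IsDesarAt n k (pword n σ) ↔
      IsDecreasingPrefix (2 * k) (pword n σ) ∧
        ¬ IsDecreasingPrefix (2 * k + 1) (pword n σ) := by
  have hne : pword n σ (2 * k - 1) ≠ pword n σ (2 * k) := by
    have e := pword_coe σ ⟨2 * k - 1, by omega⟩
    have e' := pword_coe σ ⟨2 * k, h2k⟩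
    simp only at e e'
    rw [e, e', Ne, add_left_inj, Nat.cast_inj, Fin.val_inj, σ.injective.eq_iff, Fin.mk.injEq]
    omega
  rw [isDecreasingPrefix_succ_iff (by omega), not_and, not_lt, hne.le_iff_lt]
  simp only [IsDesarAt, hk, h2k.le, h2k.ne, true_and, false_or]
  exact ⟨fun ⟨h, h'⟩ => ⟨h, fun _ => h'⟩, fun ⟨h, h'⟩ => ⟨h, h' h⟩⟩

lemma sum_isDesarAt_pword_eq_sub [CommRing K] (q : K) {k : ℕ} (hk : 1 ≤ k) (h2k : 2 * k < n) :
    ∑ σ ∈ univ.filter (fun σ : Perm (Fin n) => IsDesarAt n k (pword n σ)),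
        q ^ invStat n (pword n σ)
      = decPrefixInvGF q n (2 * k) - decPrefixInvGF q n (2 * k + 1) := by
  rw [filter_congr fun σ _ => isDesarAt_pword_iff hk h2k σ, filter_and_not, sum_sdiff_eq_sub]
  · rfl
  · intro σ
    simp only [mem_filter, mem_univ, true_and]
    exact fun h => ((isDecreasingPrefix_succ_iff (by omega) _).mp h).1

lemma sum_isDesarAt_pword [Field K] {q : K} (h1 : 1 - q ≠ 0) {k : ℕ} (hk : 1 ≤ k)
    (h2k : 2 * k < n) :
    ∑ σ ∈ univ.filter (fun σ : Perm (Fin n) => IsDesarAt n k (pword n σ)),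
        q ^ invStat n (pword n σ)
      = ((1 - q ^ (2 * k)) / (1 - q))
          * ((∏ i ∈ range (n - 2 * k - 1), (1 - q ^ (2 * k + 2 + i)))
              / (1 - q) ^ (n - 2 * k - 1))
          * q ^ Nat.choose (2 * k) 2 := by
  rw [one_sub_pow_div_one_sub h1, prod_one_sub_pow_div_one_sub_pow h1,
    sum_isDesarAt_pword_eq_sub q hk h2k, decPrefixInvGF_eq q h2k.le,
    decPrefixInvGF_eq q (show 2 * k + 1 ≤ n from h2k)]
  obtain ⟨L, rfl⟩ : ∃ L, n = 2 * k + 1 + L := ⟨n - (2 * k + 1), by omega⟩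
  rw [show 2 * k + 1 + L - 2 * k = L + 1 by omega, show 2 * k + 1 + L - (2 * k + 1) = L by omega,
    Nat.add_sub_cancel, prod_range_succ', add_zero, sum_range_succ,
    Nat.choose_succ_succ', Nat.choose_one_right]
  simp only [show ∀ i, 2 * k + 1 + (i + 1) = 2 * k + 2 + i by omega,
    show 2 * k + 1 + 1 = 2 * k + 2 by omega]
  ring

lemma sum_isDesarAt_pword_of_not_lt [CommRing K] (q : K) (hn : n ≠ 0) {k : ℕ}
    (hk : ¬ (2 ≤ 2 * k ∧ 2 * k ≤ n - 1)) :
    ∑ σ ∈ univ.filter (fun σ : Perm (Fin n) => IsDesarAt n k (pword n σ)),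
        q ^ invStat n (pword n σ)
      = if 2 * k = n then q ^ n.choose 2 else 0 := by
  split_ifs with htop
  · rw [← decPrefixInvGF_self]
    refine sum_congr (filter_congr fun σ _ => ?_) fun _ _ => rfl
    simp only [IsDesarAt, htop, le_refl, true_or, and_true, true_and]
    exact and_iff_right (show 1 ≤ k by omega)
  · refine sum_eq_zero fun σ hσ => absurd (mem_filter.mp hσ).2 ?_
    rintro ⟨hk1, hkn, -⟩
    omega

end Desarrangements

theorem stmt19_general (K : Type*) [Field K] (q : K) (h1 : (1 : K) - q ≠ 0) (n : ℕ) :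
    ((∑ σ ∈ Finset.univ.filter (fun σ : Equiv.Perm (Fin n) => IsDesar n (pword n σ)),
        q ^ invStat n (pword n σ))
      = (∑ k ∈ (Finset.range (n + 1)).filter (fun k => 2 ≤ 2 * k ∧ 2 * k ≤ n - 1),
          ((1 - q ^ (2 * k)) / (1 - q))
            * ((∏ i ∈ Finset.range (n - 2 * k - 1), (1 - q ^ (2 * k + 2 + i)))
                / (1 - q) ^ (n - 2 * k - 1))
            * q ^ Nat.choose (2 * k) 2)
        + q ^ Nat.choose n 2 * (if Even n then 1 else 0)) ∧
    (∀ k : ℕ, 2 ≤ 2 * k → 2 * k ≤ n - 1 →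
      (∑ σ ∈ Finset.univ.filter (fun σ : Equiv.Perm (Fin n) => IsDesarAt n k (pword n σ)),
          q ^ invStat n (pword n σ))
        = ((1 - q ^ (2 * k)) / (1 - q))
            * ((∏ i ∈ Finset.range (n - 2 * k - 1), (1 - q ^ (2 * k + 2 + i)))
                / (1 - q) ^ (n - 2 * k - 1))
            * q ^ Nat.choose (2 * k) 2) := by
  have trough_lt : ∀ k, 2 ≤ 2 * k → 2 * k ≤ n - 1 → _ :=
    fun k hk hkn => sum_isDesarAt_pword (n := n) h1 (k := k) (by omega) (by omega)
  refine ⟨?_, trough_lt⟩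
  rcases eq_or_ne n 0 with rfl | hn
  · simp [IsDesar, invStat, filter_singleton]
  rw [sum_isDesar_pword_eq_sum_isDesarAt hn,
    ← sum_filter_add_sum_filter_not _ fun k => 2 ≤ 2 * k ∧ 2 * k ≤ n - 1]
  congr 1
  · exact sum_congr rfl fun k hk => trough_lt k (mem_filter.mp hk).2.1 (mem_filter.mp hk).2.2
  · rw [sum_congr rfl fun k hk => sum_isDesarAt_pword_of_not_lt q hn (mem_filter.mp hk).2,
      sum_ite_two_mul_eq n _ fun k hk => mem_filter.mpr ⟨mem_range.mpr (by omega), by omega⟩,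
      mul_ite, mul_one, mul_zero]

theorem stmt19 (K : Type*) [Field K] (q : K) (h1 : (1 : K) - q ≠ 0) (n : ℕ) (hn : 1 ≤ n) :
    ((∑ σ ∈ Finset.univ.filter (fun σ : Equiv.Perm (Fin n) => IsDesar n (pword n σ)),
        q ^ invStat n (pword n σ))
      = (∑ k ∈ (Finset.range (n + 1)).filter (fun k => 2 ≤ 2 * k ∧ 2 * k ≤ n - 1),
          ((1 - q ^ (2 * k)) / (1 - q))
            * ((∏ i ∈ Finset.range (n - 2 * k - 1), (1 - q ^ (2 * k + 2 + i)))
                / (1 - q) ^ (n - 2 * k - 1))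
            * q ^ Nat.choose (2 * k) 2)
        + q ^ Nat.choose n 2 * (if Even n then 1 else 0)) ∧
    (∀ k : ℕ, 2 ≤ 2 * k → 2 * k ≤ n - 1 →
      (∑ σ ∈ Finset.univ.filter (fun σ : Equiv.Perm (Fin n) => IsDesarAt n k (pword n σ)),
          q ^ invStat n (pword n σ))
        = ((1 - q ^ (2 * k)) / (1 - q))
            * ((∏ i ∈ Finset.range (n - 2 * k - 1), (1 - q ^ (2 * k + 2 + i)))
                / (1 - q) ^ (n - 2 * k - 1))
            * q ^ Nat.choose (2 * k) 2) :=
  stmt19_general K q h1 n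
end
end
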